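/- Let S ⊆ ℕ^d be a good semigroup, E ⊆ S a good ideal, α ∈ S, and F ⊊ I. Assume Δ^E_F(α) ≠ ∅ and Δ^E_H(α) ≠ ∅ for some nonempty H ⊊ F. Then there exists a set T with (F \ H) ⊆ T ⊊ F such that Δ^E_T(α) ≠ ∅. -/

import Mathlib

/-!
Take `β ∈ Δ^E_F(α)`, `γ ∈ Δ^E_H(α)` and `i ∈ H`. They differ (on `F \ H`) but agree at `i`,
so (G2) gives `ε ∈ E` with `ε_i > α_i` and `ε ≥ β ∧ γ ≥ α`, equal to `β ∧ γ` wherever `β`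
and `γ` differ. Hence `ε` agrees with `α` on `F \ H` and exceeds it off `F`, so `ε ∈ Δ^E_T(α)`
for `T = {j | ε_j = α_j}`, which lies between `F \ H` and `F \ {i}`.
-/

/-! Common definitions for good semigroups in `ℕ^d`. -/

/-- A *good semigroup*: a submonoid of `ℕ^d` satisfying (G1), (G2), (G3). -/
def IsGoodSemigroup {d : ℕ} (S : Set (Fin d → ℕ)) : Prop :=
  (0 : Fin d → ℕ) ∈ S ∧
  (∀ α ∈ S, ∀ β ∈ S, α + β ∈ S) ∧
  (∀ α ∈ S, ∀ β ∈ S, α ⊓ β ∈ S) ∧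
  (∀ α ∈ S, ∀ β ∈ S, α ≠ β → ∀ i : Fin d, α i = β i →
    ∃ ε ∈ S, α i < ε i ∧ ∀ j : Fin d, j ≠ i →
      min (α j) (β j) ≤ ε j ∧ (α j ≠ β j → ε j = min (α j) (β j))) ∧
  (∃ c : Fin d → ℕ, ∀ x : Fin d → ℕ, c ≤ x → x ∈ S)

/-- A *good ideal* of `S`: a nonempty subset `E ⊆ S` with `E + S ⊆ E`
satisfying (G1) and (G2). -/
def IsGoodIdeal {d : ℕ} (S E : Set (Fin d → ℕ)) : Prop :=
  E ⊆ S ∧ E.Nonempty ∧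
  (∀ α ∈ E, ∀ σ ∈ S, α + σ ∈ E) ∧
  (∀ α ∈ E, ∀ β ∈ E, α ⊓ β ∈ E) ∧
  (∀ α ∈ E, ∀ β ∈ E, α ≠ β → ∀ i : Fin d, α i = β i →
    ∃ ε ∈ E, α i < ε i ∧ ∀ j : Fin d, j ≠ i →
      min (α j) (β j) ≤ ε j ∧ (α j ≠ β j → ε j = min (α j) (β j)))

/-- `Δ^E_F(α)`. -/
def DeltaSet {d : ℕ} (E : Set (Fin d → ℕ)) (F : Finset (Fin d)) (α : Fin d → ℕ) :
    Set (Fin d → ℕ) :=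
  {β | β ∈ E ∧ (∀ i ∈ F, β i = α i) ∧ ∀ j ∉ F, α j < β j}

/-- `Δ̃^E_F(α)`. -/
def DeltaTilde {d : ℕ} (E : Set (Fin d → ℕ)) (F : Finset (Fin d)) (α : Fin d → ℕ) :
    Set (Fin d → ℕ) :=
  {β | β ∈ E ∧ (∀ i ∈ F, β i = α i) ∧ ∀ j ∉ F, α j ≤ β j} \ {α}

/-- `c` is the conductor of `E`: the minimal element with `c + ℕ^d ⊆ E`. -/
def IsConductor {d : ℕ} (E : Set (Fin d → ℕ)) (c : Fin d → ℕ) : Prop :=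
  (∀ x : Fin d → ℕ, c ≤ x → x ∈ E) ∧
  ∀ c' : Fin d → ℕ, (∀ x : Fin d → ℕ, c' ≤ x → x ∈ E) → c ≤ c'

/-- `α ≤ β` are consecutive in `A`. -/
def ConsecutiveIn {d : ℕ} (A : Set (Fin d → ℕ)) (α β : Fin d → ℕ) : Prop :=
  α ∈ A ∧ β ∈ A ∧ α ≤ β ∧
  ∀ δ ∈ A, α ≤ δ → δ ≤ β → δ = α ∨ δ = β

/-- `α` is the complete infimum of the family `β` (with `Δ`-sets taken in `S`). -/
def IsCompleteInf {d : ℕ} (S : Set (Fin d → ℕ)) (α : Fin d → ℕ) {r : ℕ}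
    (β : Fin r → Fin d → ℕ) : Prop :=
  2 ≤ r ∧ ∃ F : Fin r → Finset (Fin d),
    (∀ j, (F j).Nonempty ∧ F j ≠ Finset.univ) ∧
    (∀ j, β j ∈ DeltaSet S (F j) α) ∧
    (∀ j k, j ≠ k → α = β j ⊓ β k) ∧
    (∀ x : Fin d, ∃ j, x ∉ F j)

/-- `α` is a complete infimum in `A` of the elements of the family `β`. -/
def IsCompleteInfIn {d : ℕ} (S A : Set (Fin d → ℕ)) (α : Fin d → ℕ) {r : ℕ}
    (β : Fin r → Fin d → ℕ) : Prop :=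
  α ∈ A ∧ (∀ k, β k ∈ A) ∧ IsCompleteInf S α β

/-- The order `≤≤`: `α = β` or `α_j < β_j` for every `j`. -/
def DomLE {d : ℕ} (α β : Fin d → ℕ) : Prop := α = β ∨ ∀ j, α j < β j

/-- The set `B`: maximal elements of `(S \ E) \ prev` with respect to `≤≤`. -/
def Bstep {d : ℕ} (S E prev : Set (Fin d → ℕ)) : Set (Fin d → ℕ) :=
  {α | α ∈ (S \ E) \ prev ∧ ∀ β ∈ (S \ E) \ prev, DomLE α β → β = α}

/-- The set `C`: elements of `B` that are complete infima in `S \ E` of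
elements of `B` (with `1 < r ≤ d`). -/
def Cstep {d : ℕ} (S E prev : Set (Fin d → ℕ)) : Set (Fin d → ℕ) :=
  {α | α ∈ Bstep S E prev ∧ ∃ r : ℕ, 1 < r ∧ r ≤ d ∧
    ∃ β : Fin r → Fin d → ℕ, (∀ k, β k ∈ Bstep S E prev) ∧
      IsCompleteInfIn S (S \ E) α β}

/-- `D = B \ C`. -/
def Dstep {d : ℕ} (S E prev : Set (Fin d → ℕ)) : Set (Fin d → ℕ) :=
  Bstep S E prev \ Cstep S E prev

/-- `Dacc S E i = D^(1) ∪ ⋯ ∪ D^(i)`. -/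
def Dacc {d : ℕ} (S E : Set (Fin d → ℕ)) : ℕ → Set (Fin d → ℕ)
  | 0 => ∅
  | (i + 1) => Dacc S E i ∪ Dstep S E (Dacc S E i)

/-- `N` is the number of levels of `S \ E`: the least `N` with
`S \ E = D^(1) ∪ ⋯ ∪ D^(N)`. -/
def IsLevelsNumber {d : ℕ} (S E : Set (Fin d → ℕ)) (N : ℕ) : Prop :=
  (S \ E) ⊆ Dacc S E N ∧ ∀ M : ℕ, (S \ E) ⊆ Dacc S E M → N ≤ M

/-- The level `A_i := D^(N+1-i)` for `1 ≤ i ≤ N` (and `∅` otherwise). -/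
def Alevel {d : ℕ} (S E : Set (Fin d → ℕ)) (N i : ℕ) : Set (Fin d → ℕ) :=
  if 1 ≤ i ∧ i ≤ N then Dstep S E (Dacc S E (N - i)) else ∅

/-- `α` is (the representative of) a `U`-subspace of `E` (w.r.t. conductor `cE`):
`α ∈ E` and `α_j = cE_j` for every `j ∉ U`. -/
def IsSubspaceRep {d : ℕ} (E : Set (Fin d → ℕ)) (cE : Fin d → ℕ)
    (U : Finset (Fin d)) (α : Fin d → ℕ) : Prop :=
  α ∈ E ∧ ∀ j ∉ U, α j = cE j

/-- `β(U) ∈ Δ^E_F(α(U))`, at the level of representatives. -/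
def SubDelta {d : ℕ} (E : Set (Fin d → ℕ)) (cE : Fin d → ℕ)
    (U F : Finset (Fin d)) (α β : Fin d → ℕ) : Prop :=
  IsSubspaceRep E cE U β ∧ (∀ j ∈ F, β j = α j) ∧
  ∀ j ∈ U, j ∉ F → α j < β j

/-- `β(U) ∈ Δ̃^E_F(α(U))`, at the level of representatives. -/
def SubDeltaT {d : ℕ} (E : Set (Fin d → ℕ)) (cE : Fin d → ℕ)
    (U F : Finset (Fin d)) (α β : Fin d → ℕ) : Prop :=
  IsSubspaceRep E cE U β ∧ (∀ j ∈ F, β j = α j) ∧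
  (∀ j ∈ U, j ∉ F → α j ≤ β j) ∧ ¬(∀ j ∈ U, β j = α j)

/-- `α(U) ≤ θ(U)` are consecutive among the `U`-subspaces of `S`. -/
def SubConsecutive {d : ℕ} (S : Set (Fin d → ℕ)) (cE : Fin d → ℕ)
    (U : Finset (Fin d)) (α β : Fin d → ℕ) : Prop :=
  IsSubspaceRep S cE U α ∧ IsSubspaceRep S cE U β ∧ (∀ i ∈ U, α i ≤ β i) ∧
  ∀ δ : Fin d → ℕ, IsSubspaceRep S cE U δ → (∀ i ∈ U, α i ≤ δ i) →
    (∀ i ∈ U, δ i ≤ β i) → (∀ i ∈ U, δ i = α i) ∨ (∀ i ∈ U, δ i = β i)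

/-- `α(U)` is the complete infimum of the family of `U`-subspaces `β`. -/
def SubIsCompleteInf {d : ℕ} (S : Set (Fin d → ℕ)) (cE : Fin d → ℕ)
    (U : Finset (Fin d)) (α : Fin d → ℕ) {r : ℕ}
    (β : Fin r → Fin d → ℕ) : Prop :=
  2 ≤ r ∧ ∃ F : Fin r → Finset (Fin d),
    (∀ j, (F j).Nonempty ∧ F j ⊂ U) ∧
    (∀ j, SubDelta S cE U (F j) α (β j)) ∧
    (∀ j k, j ≠ k → ∀ i ∈ U, α i = min (β j i) (β k i)) ∧
    (∀ x : Fin d, ∃ j, x ∉ F j)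

def HasPropertyG2 {d : ℕ} (E : Set (Fin d → ℕ)) : Prop :=
  ∀ α ∈ E, ∀ β ∈ E, α ≠ β → ∀ i : Fin d, α i = β i →
    ∃ ε ∈ E, α i < ε i ∧ ∀ j : Fin d, j ≠ i →
      min (α j) (β j) ≤ ε j ∧ (α j ≠ β j → ε j = min (α j) (β j))

theorem IsGoodIdeal.hasPropertyG2 {d : ℕ} {S E : Set (Fin d → ℕ)} (hE : IsGoodIdeal S E) :
    HasPropertyG2 E :=
  hE.2.2.2.2

namespace DeltaSet

variable {d : ℕ} {E : Set (Fin d → ℕ)} {F H : Finset (Fin d)} {α β γ : Fin d → ℕ}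

theorem le_of_mem (hβ : β ∈ DeltaSet E F α) : α ≤ β := fun j => by
  by_cases hj : j ∈ F
  · exact (hβ.2.1 j hj).ge
  · exact (hβ.2.2 j hj).le

theorem ne_of_mem_of_mem {k : Fin d} (hβ : β ∈ DeltaSet E F α) (hγ : γ ∈ DeltaSet E H α)
    (hkF : k ∈ F) (hkH : k ∉ H) : β ≠ γ := by
  rintro rfl
  have := hγ.2.2 k hkH
  rw [hβ.2.1 k hkF] at this
  exact lt_irrefl _ this

theorem mem_eqLocus {ε : Fin d → ℕ} (hεE : ε ∈ E) (hαε : α ≤ ε) :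
    ε ∈ DeltaSet E (Finset.univ.filter fun j => ε j = α j) α := by
  refine ⟨hεE, fun j hj => (Finset.mem_filter.1 hj).2, fun j hj => ?_⟩
  simp only [Finset.mem_filter, Finset.mem_univ, true_and] at hj
  exact lt_of_le_of_ne (hαε j) (Ne.symm hj)

theorem exists_of_hasPropertyG2 (hE : HasPropertyG2 E) (hβ : β ∈ DeltaSet E F α)
    (hγ : γ ∈ DeltaSet E H α) (hβγ : β ≠ γ) {i : Fin d} (hiF : i ∈ F) (hiH : i ∈ H) :
    ∃ ε ∈ E, α ≤ ε ∧ α i < ε i ∧ (∀ j ∈ F, j ∉ H → ε j = α j) ∧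
      ∀ j, j ∉ F → j ∉ H → α j < ε j := by
  have hβi : β i = α i := hβ.2.1 i hiF
  obtain ⟨ε, hεE, hεi, hεj⟩ := hE β hβ.1 γ hγ.1 hβγ i (by rw [hβi, hγ.2.1 i hiH])
  have hαβ := le_of_mem hβ
  have hαγ := le_of_mem hγ
  refine ⟨ε, hεE, fun j => ?_, hβi ▸ hεi, fun j hjF hjH => ?_, fun j hjF hjH => ?_⟩
  · rcases eq_or_ne j i with rfl | hji
    · exact hβi ▸ hεi.le
    · exact (le_min (hαβ j) (hαγ j)).trans (hεj j hji).1
  · have hβj := hβ.2.1 j hjF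
    have hγj := hγ.2.2 j hjH
    rw [(hεj j (by rintro rfl; exact hjH hiH)).2 (by omega)]
    omega
  · exact (lt_min (hβ.2.2 j hjF) (hγ.2.2 j hjH)).trans_le
      (hεj j (by rintro rfl; exact hjF hiF)).1

end DeltaSet

theorem stmt_9_general {d : ℕ} (S E : Set (Fin d → ℕ)) (hE : IsGoodIdeal S E) (α : Fin d → ℕ)
    (F H : Finset (Fin d))
    (hHne : H.Nonempty) (hHF : H ⊂ F)
    (h1 : (DeltaSet E F α).Nonempty) (h2 : (DeltaSet E H α).Nonempty) :
    ∃ T : Finset (Fin d), F \ H ⊆ T ∧ T ⊂ F ∧ (DeltaSet E T α).Nonempty := by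
  obtain ⟨β, hβ⟩ := h1
  obtain ⟨γ, hγ⟩ := h2
  obtain ⟨i, hiH⟩ := hHne
  obtain ⟨k, hkF, hkH⟩ := Finset.exists_of_ssubset hHF
  obtain ⟨ε, hεE, hαε, hεi, hεFH, hεF⟩ := DeltaSet.exists_of_hasPropertyG2 hE.hasPropertyG2
    hβ hγ (DeltaSet.ne_of_mem_of_mem hβ hγ hkF hkH) (hHF.subset hiH) hiH
  refine ⟨Finset.univ.filter fun j => ε j = α j, fun j hj => ?_, ?_,
    ε, DeltaSet.mem_eqLocus hεE hαε⟩
  · rw [Finset.mem_sdiff] at hj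
    simpa using hεFH j hj.1 hj.2
  · refine Finset.ssubset_iff_of_subset (fun j hj => ?_) |>.2 ⟨i, hHF.subset hiH, ?_⟩
    · by_contra hjF
      have := hεF j hjF (fun h => hjF (hHF.subset h))
      simp only [Finset.mem_filter, Finset.mem_univ, true_and] at hj
      omega
    · simpa using hεi.ne'

theorem stmt_9 {d : ℕ} (hd : 1 ≤ d) (S E : Set (Fin d → ℕ))
    (hS : IsGoodSemigroup S) (hE : IsGoodIdeal S E)
    (α : Fin d → ℕ) (hα : α ∈ S)
    (F H : Finset (Fin d)) (hF : F ⊂ Finset.univ)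
    (hHne : H.Nonempty) (hHF : H ⊂ F)
    (h1 : (DeltaSet E F α).Nonempty) (h2 : (DeltaSet E H α).Nonempty) :
    ∃ T : Finset (Fin d), F \ H ⊆ T ∧ T ⊂ F ∧ (DeltaSet E T α).Nonempty :=
  stmt_9_general S E hE α F H hHne hHF h1 h2
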